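/- arXiv:2409.04544 — 3 statements merged into one kernel-verified Lean document; each statement's English description precedes it below -/
import Mathlib

section
/- If f : ℝ>0 → ℝ>0 is monotone, normalized (f(1)=1), and symmetric (x·f(1/x)=f(x)), then the mean m^f(x,y) := x·f(y/x) is jointly monotone: if 0 < x ≤ x' and 0 < y ≤ y', then m^f(x,y) ≤ m^f(x',y'). -/
/-- If `f : ℝ → ℝ` (on the positive reals) is monotone, normalized (`f 1 = 1`) and
symmetric (`x * f x⁻¹ = f x`), then the mean `m^f(x,y) := x * f (x⁻¹ * y)` is jointly
monotone: if `0 < x ≤ x'` and `0 < y ≤ y'` then `m^f(x,y) ≤ m^f(x',y')`. -/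
theorem mean_jointly_monotone (f : ℝ → ℝ)
    (hmono : ∀ a b : ℝ, 0 < b → b ≤ a → f b ≤ f a)
    (hnorm : f 1 = 1)
    (hsymm : ∀ x : ℝ, 0 < x → x * f x⁻¹ = f x) :
    ∀ x x' y y' : ℝ, 0 < x → x ≤ x' → 0 < y → y ≤ y' →
      x * f (x⁻¹ * y) ≤ x' * f (x'⁻¹ * y') := by
  intro x x' y y' hx hxx' hy hyy'
  have hx' : 0 < x' := lt_of_lt_of_le hx hxx'
  -- symmetry: a * f (a⁻¹ * b) = b * f (b⁻¹ * a) for a, b > 0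
  have key : ∀ a b : ℝ, 0 < a → 0 < b → a * f (a⁻¹ * b) = b * f (b⁻¹ * a) := by
    intro a b ha hb
    have ht : 0 < b⁻¹ * a := mul_pos (inv_pos.mpr hb) ha
    have h := hsymm (b⁻¹ * a) ht
    have hinv : (b⁻¹ * a)⁻¹ = a⁻¹ * b := by
      rw [mul_inv, inv_inv, mul_comm]
    rw [hinv] at h
    rw [← h, mul_assoc b⁻¹ a, mul_inv_cancel_left₀ hb.ne']
  -- monotone in x (via symmetry), then in y
  have step1 : x * f (x⁻¹ * y) ≤ x' * f (x'⁻¹ * y) := by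
    rw [key x y hx hy, key x' y hx' hy]
    have h1 : 0 < y⁻¹ * x := mul_pos (inv_pos.mpr hy) hx
    have h2 : y⁻¹ * x ≤ y⁻¹ * x' :=
      mul_le_mul_of_nonneg_left hxx' (le_of_lt (inv_pos.mpr hy))
    exact mul_le_mul_of_nonneg_left (hmono _ _ h1 h2) hy.le
  have step2 : x' * f (x'⁻¹ * y) ≤ x' * f (x'⁻¹ * y') := by
    have h1 : 0 < x'⁻¹ * y := mul_pos (inv_pos.mpr hx') hy
    have h2 : x'⁻¹ * y ≤ x'⁻¹ * y' :=
      mul_le_mul_of_nonneg_left hyy' (le_of_lt (inv_pos.mpr hx'))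
    exact mul_le_mul_of_nonneg_left (hmono _ _ h1 h2) hx'.le
  exact step1.trans step2
end

section
/- For a qubit (d = 2), the coherent product Δ^f A_C · √(I^f_C) is independent of f: for a diagonal state ρ = diag(p₀,p₁) with p₀,p₁ > 0, Hermitian A and Hermitian traceless ρ̇ with only off-diagonal entries, Δ^f A_C · √(I^f_C) = 2|A₀₁|·|ρ̇₀₁| for any symmetric mean m^f with m^f(x,y) > 0. -/
/-- For a qubit, the coherent product `Δ^f A_C · √(I^f_C)` is independent of `f`:
with `ρ = diag(p₀,p₁)` (`p₀, p₁ > 0`), Hermitian `A`, Hermitian traceless `B = ρ̇`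
with vanishing diagonal, and any positive symmetric mean `m^f`,
`Δ^f A_C · √(I^f_C) = 2|A₀₁||B₀₁|`. -/
theorem qubit_coherent_product_f_independent (p : Fin 2 → ℝ) (hp : ∀ j, 0 < p j)
    (A B : Matrix (Fin 2) (Fin 2) ℂ)
    (hA : A.IsHermitian) (hB : B.IsHermitian)
    (hBdiag : B 0 0 = 0 ∧ B 1 1 = 0)
    (mf : ℝ → ℝ → ℝ)
    (hmfsymm : ∀ x y : ℝ, 0 < x → 0 < y → mf x y = mf y x)
    (hmfpos : ∀ x y : ℝ, 0 < x → 0 < y → 0 < mf x y) :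
    Real.sqrt (‖A 0 1‖ ^ 2 * mf (p 0) (p 1) + ‖A 1 0‖ ^ 2 * mf (p 1) (p 0)) *
      Real.sqrt (‖B 0 1‖ ^ 2 / mf (p 0) (p 1) + ‖B 1 0‖ ^ 2 / mf (p 1) (p 0)) =
    2 * ‖A 0 1‖ * ‖B 0 1‖ := by
  have hA10 : ‖A 1 0‖ = ‖A 0 1‖ := by
    have := hA.apply 0 1
    rw [← this]; simp [norm_star]
  have hB10 : ‖B 1 0‖ = ‖B 0 1‖ := by
    have := hB.apply 0 1
    rw [← this]; simp [norm_star]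
  have hm := hmfsymm (p 1) (p 0) (hp 1) (hp 0)
  have hmpos := hmfpos (p 0) (p 1) (hp 0) (hp 1)
  rw [hA10, hB10, hm]
  set m := mf (p 0) (p 1)
  have h1 : ‖A 0 1‖ ^ 2 * m + ‖A 0 1‖ ^ 2 * m = (2 * m) * ‖A 0 1‖ ^ 2 := by ring
  have h2 : ‖B 0 1‖ ^ 2 / m + ‖B 0 1‖ ^ 2 / m = (2 / m) * ‖B 0 1‖ ^ 2 := by ring
  rw [h1, h2,
    Real.sqrt_mul (show (0:ℝ) ≤ 2 * m by positivity) (‖A 0 1‖ ^ 2),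
    Real.sqrt_mul (show (0:ℝ) ≤ 2 / m by positivity) (‖B 0 1‖ ^ 2),
    Real.sqrt_sq (norm_nonneg _), Real.sqrt_sq (norm_nonneg _)]
  rw [show Real.sqrt (2 * m) * ‖A 0 1‖ * (Real.sqrt (2 / m) * ‖B 0 1‖)
      = (Real.sqrt (2 * m) * Real.sqrt (2 / m)) * ‖A 0 1‖ * ‖B 0 1‖ by ring,
    ← Real.sqrt_mul (by positivity)]
  have : 2 * m * (2 / m) = 4 := by field_simp; ring
  rw [this, show (4:ℝ) = 2^2 by norm_num, Real.sqrt_sq (by norm_num)]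
end

section
/- Let ρ = diag(p₀,...,p_{d−1}) with pⱼ > 0, let H be Hermitian, and let m^f be a positive symmetric mean satisfying m^f(x,y) ≥ 2xy/(x+y). Then Σ_{i≠j} (pᵢ−pⱼ)²|H_{ij}|²/m^f(pᵢ,pⱼ) ≤ κ_ρ · Σ_{i≠j} ((pᵢ+pⱼ)/2)|H_{ij}|² where κ_ρ := max pⱼ / min pⱼ is the condition number of ρ. -/
open Matrix Finset

/-- Key step of the bound `I^f_C ≤ κ_ρ (ΔH)²`: for `ρ = diag(p)` with positive
entries, Hermitian `H`, and a positive symmetric mean `m^f` dominating the harmonic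
mean, `Σ_{i≠j} (pᵢ-pⱼ)²|Hᵢⱼ|²/m^f(pᵢ,pⱼ) ≤ κ_ρ Σ_{i≠j} ((pᵢ+pⱼ)/2)|Hᵢⱼ|²`,
where `κ_ρ = max pⱼ / min pⱼ` is the condition number. -/
theorem coherent_qfi_condition_number_bound (d : ℕ) [NeZero d] (p : Fin d → ℝ)
    (hp : ∀ j, 0 < p j)
    (H : Matrix (Fin d) (Fin d) ℂ) (hH : H.IsHermitian)
    (mf : ℝ → ℝ → ℝ)
    (hmfsymm : ∀ x y : ℝ, 0 < x → 0 < y → mf x y = mf y x)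
    (hmfpos : ∀ x y : ℝ, 0 < x → 0 < y → 0 < mf x y)
    (hmfharm : ∀ x y : ℝ, 0 < x → 0 < y → 2 * x * y / (x + y) ≤ mf x y) :
    (∑ i, ∑ j ∈ Finset.univ.filter (· ≠ i),
        (p i - p j) ^ 2 * ‖H i j‖ ^ 2 / mf (p i) (p j)) ≤
    (Finset.univ.sup' Finset.univ_nonempty p / Finset.univ.inf' Finset.univ_nonempty p) *
      ∑ i, ∑ j ∈ Finset.univ.filter (· ≠ i), ((p i + p j) / 2) * ‖H i j‖ ^ 2 := by

  set S := Finset.univ.sup' Finset.univ_nonempty p with hSdef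
  set I := Finset.univ.inf' Finset.univ_nonempty p with hIdef
  have hIpos : 0 < I := by
    rw [hIdef]
    exact (Finset.lt_inf'_iff _).2 fun j _ => hp j
  have hle : ∀ j, p j ≤ S := fun j => Finset.le_sup' p (Finset.mem_univ j)
  have hge : ∀ j, I ≤ p j := fun j => Finset.inf'_le p (Finset.mem_univ j)
  rw [Finset.mul_sum]
  refine Finset.sum_le_sum fun i _ => ?_
  rw [Finset.mul_sum]
  refine Finset.sum_le_sum fun j _ => ?_
  set a := p i with ha
  set b := p j with hb
  have hap : 0 < a := hp i
  have hbp : 0 < b := hp j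
  set c := ‖H i j‖ ^ 2 with hc
  have hcn : (0:ℝ) ≤ c := by positivity
  have hm := hmfpos a b hap hbp
  have hh := hmfharm a b hap hbp
  have hab : 0 < a + b := by positivity
  have hhpos : (0:ℝ) < 2 * a * b / (a + b) := by positivity
  have key : (a - b) ^ 2 * I ≤ S * (a * b) := by
    have hS0 : (0:ℝ) ≤ S := hIpos.le.trans ((hge i).trans (hle i))
    rcases le_total b a with hba | hba
    · have h1 : a * I ≤ S * b := mul_le_mul (hle i) (hge j) hIpos.le hS0
      nlinarith [mul_nonneg (mul_nonneg hbp.le (by linarith : (0:ℝ) ≤ 2*a - b)) hIpos.le,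
        mul_nonneg hap.le (sub_nonneg.2 h1)]
    · have h1 : b * I ≤ S * a := mul_le_mul (hle j) (hge i) hIpos.le hS0
      nlinarith [mul_nonneg (mul_nonneg hap.le (by linarith : (0:ℝ) ≤ 2*b - a)) hIpos.le,
        mul_nonneg hbp.le (sub_nonneg.2 h1)]
  have step1 : (a - b) ^ 2 * c / mf a b ≤ (a - b) ^ 2 * c / (2 * a * b / (a + b)) :=
    div_le_div_of_nonneg_left (by positivity) hhpos hh
  refine step1.trans ?_
  rw [div_div_eq_mul_div, div_le_iff₀ (by positivity : (0:ℝ) < 2 * a * b), div_mul_eq_mul_div,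
    div_mul_eq_mul_div, le_div_iff₀ hIpos]
  nlinarith [mul_le_mul_of_nonneg_right key (mul_nonneg hcn hab.le)]
end
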